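/- arXiv:2507.13888 — 3 statements merged into one kernel-verified Lean document; each statement's English description precedes it below -/
import Mathlib

section
/- Let T > 0, h₀ < 0, h₁ ∈ ℝ, c = (-h₀ - h₁·T)/(h₀·T²), λ = cT. If h: ℝ → ℝ is twice continuously differentiable with h(0) = h₀, h'(0) = h₁, and h''(t) + 2λ h'(t) + λ² h(t) ≥ 0 for all t ≥ 0, then h(T) ≥ 0. -/
theorem stmt_6 (T h₀ h₁ : ℝ) (hT : 0 < T) (hh₀ : h₀ < 0)
    (c lam : ℝ) (hc : c = (-h₀ - h₁ * T) / (h₀ * T ^ 2)) (hlam : lam = c * T)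
    (h : ℝ → ℝ) (hC2 : ContDiff ℝ 2 h)
    (h0 : h 0 = h₀) (h1 : deriv h 0 = h₁)
    (hineq : ∀ t ≥ (0 : ℝ),
      deriv (deriv h) t + 2 * lam * deriv h t + lam ^ 2 * h t ≥ 0) :
    (∃ t ∈ Set.Ioc (0 : ℝ) T, h t ≥ 0) ∧ h T ≥ 0 := by
  have hdh : Differentiable ℝ h := hC2.differentiable (by norm_num)
  have hC1 : ContDiff ℝ 1 (deriv h) := by
    have := (contDiff_succ_iff_deriv (n := 1)).mp hC2
    exact this.2.2
  have hdd : Differentiable ℝ (deriv h) := hC1.differentiable (by norm_num)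
  set g : ℝ → ℝ := fun t => Real.exp (lam * t) * h t with hg
  set g1 : ℝ → ℝ := fun t => Real.exp (lam * t) * (lam * h t + deriv h t) with hg1
  have hdexp : ∀ t : ℝ, HasDerivAt (fun s => Real.exp (lam * s)) (lam * Real.exp (lam * t)) t := by
    intro t
    have := (Real.hasDerivAt_exp (lam * t)).comp t ((hasDerivAt_id t).const_mul lam)
    simpa [mul_comm, Function.comp_def] using this
  have hgd : ∀ t : ℝ, HasDerivAt g (g1 t) t := by
    intro t
    have := (hdexp t).mul (hdh t).hasDerivAt
    refine this.congr_deriv ?_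
    simp [hg1]; ring
  have hg1d : ∀ t : ℝ, HasDerivAt g1
      (Real.exp (lam * t) * (deriv (deriv h) t + 2 * lam * deriv h t + lam ^ 2 * h t)) t := by
    intro t
    have hinner : HasDerivAt (fun s => lam * h s + deriv h s)
        (lam * deriv h t + deriv (deriv h) t) t :=
      (((hdh t).hasDerivAt).const_mul lam).add (hdd t).hasDerivAt
    have := (hdexp t).mul hinner
    refine this.congr_deriv ?_
    ring
  have hg1diff : Differentiable ℝ g1 := fun t => (hg1d t).differentiableAt
  have hg1mono : MonotoneOn g1 (Set.Ici (0 : ℝ)) := by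
    apply monotoneOn_of_deriv_nonneg (convex_Ici 0) hg1diff.continuous.continuousOn
      (hg1diff.differentiableOn)
    intro t ht
    rw [interior_Ici] at ht
    rw [(hg1d t).deriv]
    have := hineq t (le_of_lt (by simpa using ht))
    positivity
  -- MVT on g over [0, T]
  obtain ⟨x, hx, hxeq⟩ := exists_deriv_eq_slope g hT
    (fun t _ => ((hgd t).differentiableAt).continuousAt.continuousWithinAt)
    (fun t _ => ((hgd t).differentiableAt).differentiableWithinAt)
  have hderivg : deriv g x = g1 x := (hgd x).deriv
  have hkey : g 0 + g1 0 * T ≤ g T := by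
    have h0le : g1 0 ≤ g1 x :=
      hg1mono (Set.mem_Ici.mpr le_rfl) (Set.mem_Ici.mpr hx.1.le) hx.1.le
    have : g1 0 ≤ (g T - g 0) / (T - 0) := by
      rw [← hxeq, hderivg] at *; exact h0le
    rw [sub_zero] at this
    have h2 := (le_div_iff₀ hT).mp this
    linarith
  have hT0 : h₀ ≠ 0 := ne_of_lt hh₀
  have hTne : T ≠ 0 := ne_of_gt hT
  have hsum : g 0 + g1 0 * T = 0 := by
    simp only [hg, hg1, mul_zero, Real.exp_zero, one_mul, h0, h1]
    rw [hlam, hc]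
    field_simp
    ring
  have hgT : 0 ≤ g T := by linarith
  have hhT : h T ≥ 0 := by
    have hexp : 0 < Real.exp (lam * T) := Real.exp_pos _
    have : 0 ≤ Real.exp (lam * T) * h T := hgT
    nlinarith
  exact ⟨⟨T, ⟨hT, le_rfl⟩, hhT⟩, hhT⟩
end

section
/- Let p ∈ (0,1), T > 0, h₀ < 0, α = (-h₀)^{1-p}/((1-p)T). Suppose h: [0,T] → ℝ is continuously differentiable, h(0) = h₀, and h'(t) ≥ -α·|h(t)|^p·sgn(h(t)) for all t ∈ [0,T]. Then there exists t* ∈ [0,T] with h(t*) ≥ 0. -/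
theorem stmt_8 (p T h₀ : ℝ) (hp : p ∈ Set.Ioo (0 : ℝ) 1) (hT : 0 < T) (hh₀ : h₀ < 0)
    (α : ℝ) (hα : α = (-h₀) ^ (1 - p) / ((1 - p) * T))
    (h : ℝ → ℝ) (hC1 : ContDiffOn ℝ 1 h (Set.Icc 0 T))
    (h0 : h 0 = h₀)
    (hineq : ∀ t ∈ Set.Icc (0 : ℝ) T,
      derivWithin h (Set.Icc 0 T) t ≥ -α * |h t| ^ p * Real.sign (h t)) :
    ∃ t ∈ Set.Icc (0 : ℝ) T, h t ≥ 0 := by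
  obtain ⟨hp0, hp1⟩ := hp
  by_contra hcon
  push_neg at hcon
  have hneg : ∀ t ∈ Set.Icc (0:ℝ) T, h t < 0 := hcon
  have h1p : (0:ℝ) < 1 - p := by linarith
  have hh0pos : (0:ℝ) < -h₀ := by linarith
  have hα0 : 0 < α := by
    rw [hα]
    positivity
  set F : ℝ → ℝ := fun t => (-h t) ^ (1-p) + (1-p) * α * t with hF
  have hcont : ContinuousOn h (Set.Icc 0 T) := hC1.continuousOn
  have hFcont : ContinuousOn F (Set.Icc 0 T) := by
    apply ContinuousOn.add
    · exact hcont.neg.rpow_const (fun x hx => Or.inl (by have := hneg x hx; simp only [Pi.neg_apply]; linarith))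
    · fun_prop
  have hFd : ∀ x ∈ interior (Set.Icc (0:ℝ) T),
      HasDerivAt F (-(deriv h x) * (1-p) * (-h x) ^ (1-p-1) + (1-p)*α) x ∧
      α * (-h x) ^ p ≤ deriv h x := by
    intro x hx
    rw [interior_Icc] at hx
    have hxm : Set.Icc (0:ℝ) T ∈ nhds x := Icc_mem_nhds hx.1 hx.2
    have hxI : x ∈ Set.Icc (0:ℝ) T := ⟨hx.1.le, hx.2.le⟩
    have hhx : h x < 0 := hneg x hxI
    have hdiff : DifferentiableAt ℝ h x :=
      (hC1.differentiableOn one_ne_zero).differentiableAt hxm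
    have hdw : derivWithin h (Set.Icc 0 T) x = deriv h x := derivWithin_of_mem_nhds hxm
    have hineq' := hineq x hxI
    rw [hdw, Real.sign_of_neg hhx, abs_of_neg hhx] at hineq'
    constructor
    · have h2 : HasDerivAt (fun t => (1-p)*α*t) ((1-p)*α) x := by
        simpa using (hasDerivAt_id x).const_mul ((1-p)*α)
      exact ((hdiff.hasDerivAt.neg).rpow_const (Or.inl (by simp only [Pi.neg_apply]; linarith))).add h2
    · nlinarith [hineq']
  have hanti : AntitoneOn F (Set.Icc 0 T) := by
    apply antitoneOn_of_deriv_nonpos (convex_Icc 0 T) hFcont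
    · intro x hx
      exact ((hFd x hx).1).differentiableAt.differentiableWithinAt
    · intro x hx
      rw [(hFd x hx).1.deriv]
      obtain ⟨_, hd⟩ := hFd x hx
      rw [interior_Icc] at hx
      have hhx : (0:ℝ) < -h x := by have := hneg x ⟨hx.1.le, hx.2.le⟩; linarith
      have hpow : (0:ℝ) < (-h x) ^ (1-p-1) := Real.rpow_pos_of_pos hhx _
      have key : (-h x) ^ (1-p-1) * (-h x) ^ p = 1 := by
        rw [← Real.rpow_add hhx]
        norm_num
      have k1 := mul_le_mul_of_nonneg_right hd hpow.le
      have k2 : α * ((-h x) ^ (1-p-1) * (-h x) ^ p) = α := by rw [key, mul_one]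
      nlinarith [k1, k2]
  have h0I : (0:ℝ) ∈ Set.Icc (0:ℝ) T := ⟨le_rfl, hT.le⟩
  have hTI : T ∈ Set.Icc (0:ℝ) T := ⟨hT.le, le_rfl⟩
  have hFT := hanti h0I hTI hT.le
  have hαT : (1-p) * α * T = (-h₀) ^ (1-p) := by
    rw [hα]; field_simp
  have hFTpos : (0:ℝ) < (-h T) ^ (1-p) :=
    Real.rpow_pos_of_pos (by have := hneg T hTI; linarith) _
  simp only [hF, h0, mul_zero, add_zero] at hFT
  nlinarith [hFT]
end

section
/- Let T > 0, h₀ < 0, h₁ ∈ ℝ, λ = cT with c = (-h₀ - h₁T)/(h₀T²). If h: [0,∞) → ℝ is C², h(0) = h₀, h'(0) = h₁, and h''(t) + 2λh'(t) + λ²h(t) ≥ 0 for all t ≥ 0, then h(t) ≥ 0 for all t ≥ T. -/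
/-!
Put `g t = exp (lam * t) * h t`. Then `g'' = exp (lam * t) * (h'' + 2 lam h' + lam² h) ≥ 0`, so `g`
is convex on `[0, ∞)` and lies above its tangent line at `0`. The choice of `lam` makes
`g'(0) = lam h₀ + h₁ = -h₀ / T`, so this tangent line `h₀ (1 - t / T)` is nonnegative for `t ≥ T`,
hence so are `g` and `h`.
-/

open Real Set

theorem hasDerivAt_exp_mul_mul {f : ℝ → ℝ} {f' t : ℝ} (lam : ℝ) (hf : HasDerivAt f f' t) :
    HasDerivAt (fun s => exp (lam * s) * f s) (exp (lam * t) * (lam * f t + f')) t := by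
  have hexp : HasDerivAt (fun s => exp (lam * s)) (exp (lam * t) * lam) t :=
    (HasDerivAt.exp ((hasDerivAt_id t).const_mul lam)).congr_deriv (by simp)
  exact (hexp.mul hf).congr_deriv (by ring)

theorem deriv_exp_mul_mul {f : ℝ → ℝ} (lam : ℝ) (hf : Differentiable ℝ f) :
    deriv (fun s => exp (lam * s) * f s) = fun t => exp (lam * t) * (lam * f t + deriv f t) :=
  funext fun t => (hasDerivAt_exp_mul_mul lam (hf t).hasDerivAt).deriv

theorem iterate_deriv_two_exp_mul_mul {f : ℝ → ℝ} (lam t : ℝ) (hf : Differentiable ℝ f)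
    (hf' : Differentiable ℝ (deriv f)) :
    deriv^[2] (fun s => exp (lam * s) * f s) t =
      exp (lam * t) * (deriv (deriv f) t + 2 * lam * deriv f t + lam ^ 2 * f t) := by
  rw [Function.iterate_succ_apply, Function.iterate_one, deriv_exp_mul_mul lam hf]
  have hsum : HasDerivAt (fun s => lam * f s + deriv f s)
      (lam * deriv f t + deriv (deriv f) t) t :=
    ((hf t).hasDerivAt.const_mul lam).add (hf' t).hasDerivAt
  exact (hasDerivAt_exp_mul_mul lam hsum).deriv.trans (by ring)

theorem convexOn_exp_mul_mul {D : Set ℝ} {f : ℝ → ℝ} (lam : ℝ) (hD : Convex ℝ D)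
    (hf : ContDiff ℝ 2 f)
    (hineq : ∀ t ∈ D, 0 ≤ deriv (deriv f) t + 2 * lam * deriv f t + lam ^ 2 * f t) :
    ConvexOn ℝ D (fun s => exp (lam * s) * f s) := by
  have hdf : Differentiable ℝ f := hf.differentiable two_ne_zero
  have hdf' : Differentiable ℝ (deriv f) := (hf.iterate_deriv' 1 1).differentiable one_ne_zero
  refine convexOn_of_deriv2_nonneg' hD ?_ ?_ fun t ht => ?_
  · exact fun t _ =>
      (hasDerivAt_exp_mul_mul lam (hdf t).hasDerivAt).differentiableAt.differentiableWithinAt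
  · rw [deriv_exp_mul_mul lam hdf]
    exact fun t _ => (hasDerivAt_exp_mul_mul lam (((hdf t).hasDerivAt.const_mul lam).add
      (hdf' t).hasDerivAt)).differentiableAt.differentiableWithinAt
  · rw [iterate_deriv_two_exp_mul_mul lam t hdf hdf']
    exact mul_nonneg (exp_pos _).le (hineq t ht)

theorem ConvexOn.add_deriv_mul_sub_le {S : Set ℝ} {g : ℝ → ℝ} {a t : ℝ} (hg : ConvexOn ℝ S g)
    (ha : a ∈ S) (ht : t ∈ S) (hat : a ≤ t) (hd : DifferentiableAt ℝ g a) :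
    g a + deriv g a * (t - a) ≤ g t := by
  rcases hat.eq_or_lt with rfl | hlt
  · simp
  have hslope := hg.deriv_le_slope ha ht hlt hd
  rw [slope_def_field, le_div_iff₀ (sub_pos.mpr hlt)] at hslope
  linarith

theorem stmt_14 (T h₀ h₁ : ℝ) (hT : 0 < T) (hh₀ : h₀ < 0)
    (c lam : ℝ) (hc : c = (-h₀ - h₁ * T) / (h₀ * T ^ 2)) (hlam : lam = c * T)
    (h : ℝ → ℝ) (hC2 : ContDiff ℝ 2 h)
    (h0 : h 0 = h₀) (h1 : deriv h 0 = h₁)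
    (hineq : ∀ t ≥ (0 : ℝ),
      deriv (deriv h) t + 2 * lam * deriv h t + lam ^ 2 * h t ≥ 0) :
    ∀ t ≥ T, h t ≥ 0 := by
  intro t ht
  have ht0 : (0 : ℝ) ≤ t := hT.le.trans ht
  have hdh : Differentiable ℝ h := hC2.differentiable two_ne_zero
  have hslope0 : lam * h₀ + h₁ = -h₀ / T := by
    rw [hlam, hc]
    field_simp [hh₀.ne]
    ring
  have htangent : h₀ + -h₀ / T * t ≤ exp (lam * t) * h t := by
    have := (convexOn_exp_mul_mul lam (convex_Ici 0) hC2 hineq).add_deriv_mul_sub_le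
      self_mem_Ici ht0 ht0 (hasDerivAt_exp_mul_mul lam (hdh 0).hasDerivAt).differentiableAt
    simpa only [deriv_exp_mul_mul lam hdh, mul_zero, exp_zero, one_mul, sub_zero, h0, h1,
      hslope0] using this
  have hline : 0 ≤ h₀ + -h₀ / T * t := by
    rw [show h₀ + -h₀ / T * t = -h₀ / T * (t - T) by field_simp; ring]
    exact mul_nonneg (div_nonneg (neg_nonneg.mpr hh₀.le) hT.le) (sub_nonneg.mpr ht)
  exact nonneg_of_mul_nonneg_right (hline.trans htangent) (exp_pos _)
end
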